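/- Let Γ be a nonempty closed subset of ℝ², let S_Γ be its skeleton, and let u(p) = dist(p, Γ). Then for every p ∈ ℝ² with p ∉ Γ and p ∉ closure(S_Γ), u is (Fréchet) differentiable at p and ‖∇u(p)‖ = 1. -/

import Mathlib

open Metric Filter Topology
open scoped InnerProductSpace

set_option maxHeartbeats 1000000

private lemma inner_unit_le_norm_sub {E : Type*} [NormedAddCommGroup E]
    [InnerProductSpace ℝ E] (a h : E) (ha : a ≠ 0) :
    ⟪‖a‖⁻¹ • a, h⟫_ℝ ≤ ‖a + h‖ - ‖a‖ := by
  have hna : 0 < ‖a‖ := norm_pos_iff.mpr ha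
  have key : ⟪a, h⟫_ℝ ≤ ‖a‖ * (‖a + h‖ - ‖a‖) := by
    have h1 := real_inner_le_norm a (a + h)
    have h2 : ⟪a, a + h⟫_ℝ = ‖a‖ ^ 2 + ⟪a, h⟫_ℝ := by
      rw [inner_add_right, real_inner_self_eq_norm_sq]
    nlinarith
  rw [real_inner_smul_left]
  calc ‖a‖⁻¹ * ⟪a, h⟫_ℝ ≤ ‖a‖⁻¹ * (‖a‖ * (‖a + h‖ - ‖a‖)) :=
        mul_le_mul_of_nonneg_left key (inv_pos.mpr hna).le
    _ = ‖a + h‖ - ‖a‖ := inv_mul_cancel_left₀ hna.ne' _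

/-- The skeleton of Γ: points having at least two distinct nearest points in Γ. -/
def skeleton (Γ : Set (EuclideanSpace ℝ (Fin 2))) : Set (EuclideanSpace ℝ (Fin 2)) :=
  {p | ∃ q₁ ∈ Γ, ∃ q₂ ∈ Γ, q₁ ≠ q₂ ∧
    ‖p - q₁‖ = Metric.infDist p Γ ∧ ‖p - q₂‖ = Metric.infDist p Γ}

/-- For a nonempty closed set Γ ⊆ ℝ², the distance function u( ) = dist( , Γ) is
differentiable, with a gradient of unit norm, at every point outside Γ and
outside the closure of the skeleton of Γ. -/
theorem grad_norm_one_off_skeleton_closure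
    (Γ : Set (EuclideanSpace ℝ (Fin 2))) (hne : Γ.Nonempty) (hcl : IsClosed Γ)
    (p : EuclideanSpace ℝ (Fin 2)) (hp : p ∉ Γ) (hps : p ∉ closure (skeleton Γ)) :
    DifferentiableAt ℝ (fun x => Metric.infDist x Γ) p ∧
      ‖gradient (fun x => Metric.infDist x Γ) p‖ = 1 := by
  classical
  have hpn : p ∉ skeleton Γ := fun h => hps (subset_closure h)
  obtain ⟨q, hqΓ, hqd⟩ := hcl.exists_infDist_eq_dist hne p
  have hup : 0 < Metric.infDist p Γ := (hcl.notMem_iff_infDist_pos hne).mp hp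
  have hpq : p ≠ q := by rintro rfl; exact hp hqΓ
  have hpq' : p - q ≠ 0 := sub_ne_zero.mpr hpq
  have hnpq : 0 < ‖p - q‖ := norm_pos_iff.mpr hpq'
  have huq : ∀ q' ∈ Γ, dist p q' = Metric.infDist p Γ → q' = q := by
    intro q' hq' hd'
    by_contra hne'
    exact hpn ⟨q', hq', q, hqΓ, hne', by rw [← dist_eq_norm]; exact hd',
      by rw [← dist_eq_norm]; exact hqd.symm⟩
  choose Q hQΓ hQd using fun x => hcl.exists_infDist_eq_dist hne x
  -- continuity of the nearest-point map at p
  have hQcont : Tendsto Q (𝓝 p) (𝓝 q) := by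
    rw [Metric.tendsto_nhds]
    by_contra hcon
    push_neg at hcon
    obtain ⟨ε, hε, hfr⟩ := hcon
    have hfr : ∃ᶠ x in 𝓝 p, ¬ dist (Q x) q < ε := hfr.mono fun x hx => not_lt.mpr hx
    set G : Filter (EuclideanSpace ℝ (Fin 2)) :=
      𝓝 p ⊓ 𝓟 {x | ¬ dist (Q x) q < ε} with hG
    haveI hGne : G.NeBot := Filter.frequently_iff_neBot.mp hfr
    set K' : Set (EuclideanSpace ℝ (Fin 2)) :=
      (Γ ∩ Metric.closedBall p (Metric.infDist p Γ + 2)) ∩ {y | ε ≤ dist y q} with hK'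
    have hK'c : IsCompact K' := by
      refine ((isCompact_closedBall p _).inter_left hcl).inter_right ?_
      exact isClosed_le continuous_const (continuous_id.dist continuous_const)
    have hmem : ∀ᶠ x in G, Q x ∈ K' := by
      rw [hG, Filter.eventually_inf_principal]
      filter_upwards [Metric.closedBall_mem_nhds p one_pos] with x hx hxA
      rw [Metric.mem_closedBall] at hx
      refine ⟨⟨hQΓ x, ?_⟩, not_lt.mp hxA⟩
      rw [Metric.mem_closedBall]
      have h1 : dist (Q x) p ≤ dist (Q x) x + dist x p := dist_triangle _ _ _
      have h2 : dist (Q x) x = Metric.infDist x Γ := by rw [dist_comm, ← hQd x]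
      have h3 : Metric.infDist x Γ ≤ Metric.infDist p Γ + dist x p :=
        Metric.infDist_le_infDist_add_dist
      linarith
    have hle : map Q G ≤ 𝓟 K' := Filter.le_principal_iff.mpr (Filter.mem_map.mpr hmem)
    obtain ⟨q', hq'K', hq'cl⟩ := hK'c.exists_clusterPt hle
    have hud : Tendsto (fun x => Metric.infDist x Γ) (𝓝 p) (𝓝 (Metric.infDist p Γ)) :=
      (Metric.continuous_infDist_pt Γ).tendsto p
    have hdp : Tendsto (fun x => dist x p) (𝓝 p) (𝓝 0) :=
      tendsto_iff_dist_tendsto_zero.mp tendsto_id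
    have hten : Tendsto (fun x => dist p (Q x)) G (𝓝 (Metric.infDist p Γ)) := by
      have hl : Tendsto (fun x => Metric.infDist x Γ - dist x p) G
          (𝓝 (Metric.infDist p Γ)) := by
        have h := hud.sub hdp
        simpa using h.mono_left inf_le_left
      have hr : Tendsto (fun x => Metric.infDist x Γ + dist x p) G
          (𝓝 (Metric.infDist p Γ)) := by
        have h := hud.add hdp
        simpa using h.mono_left inf_le_left
      refine tendsto_of_tendsto_of_tendsto_of_le_of_le hl hr ?_ ?_
      · intro x
        have h1 : dist x (Q x) ≤ dist x p + dist p (Q x) := dist_triangle _ _ _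
        have h2 : Metric.infDist x Γ = dist x (Q x) := hQd x
        simp only
        linarith
      · intro x
        have h1 : dist p (Q x) ≤ dist p x + dist x (Q x) := dist_triangle _ _ _
        have h2 : Metric.infDist x Γ = dist x (Q x) := hQd x
        have h3 : dist p x = dist x p := dist_comm _ _
        simp only
        linarith
    have hcp : ClusterPt (dist p q') (map (fun x => dist p (Q x)) G) := by
      have hc : ContinuousAt (fun y => dist p y) q' :=
        (continuous_const.dist continuous_id).continuousAt
      have hf : Tendsto (fun y => dist p y) (map Q G) (map (fun x => dist p (Q x)) G) :=
        le_of_eq (by rw [Filter.map_map]; rfl)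
      exact hq'cl.map hc hf
    have heq : dist p q' = Metric.infDist p Γ :=
      t2_iff_nhds.mp inferInstance (hcp.mono hten)
    have hq'q : q' = q := huq q' hq'K'.1.1 heq
    have h2 := hq'K'.2
    rw [hq'q] at h2
    simp only [Set.mem_setOf_eq, dist_self] at h2
    linarith
  -- the candidate gradient
  set v : EuclideanSpace ℝ (Fin 2) := ‖p - q‖⁻¹ • (p - q) with hv
  have hvnorm : ‖v‖ = 1 := by
    rw [hv, norm_smul, norm_inv, norm_norm, inv_mul_cancel₀ hnpq.ne']
  have hupq : Metric.infDist p Γ = ‖p - q‖ := by rw [hqd, dist_eq_norm]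
  have hvt : Tendsto (fun x => ‖p - Q x‖⁻¹ • (p - Q x)) (𝓝 p) (𝓝 v) := by
    have hc : ContinuousAt (fun y : EuclideanSpace ℝ (Fin 2) => ‖p - y‖⁻¹ • (p - y)) q := by
      have h1 : ContinuousAt (fun y : EuclideanSpace ℝ (Fin 2) => p - y) q :=
        (continuous_const.sub continuous_id).continuousAt
      exact (h1.norm.inv₀ hnpq.ne').smul h1
    exact hc.tendsto.comp hQcont
  have hwt : Tendsto (fun x => ‖x - q‖⁻¹ • (x - q)) (𝓝 p) (𝓝 v) := by
    have h1 : ContinuousAt (fun x : EuclideanSpace ℝ (Fin 2) => x - q) p :=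
      (continuous_id.sub continuous_const).continuousAt
    exact (h1.norm.inv₀ hnpq.ne').smul h1
  have hgrad : HasGradientAt (fun x => Metric.infDist x Γ) v p := by
    rw [hasGradientAt_iff_isLittleO, Asymptotics.isLittleO_iff]
    intro c hc
    have e1 : ∀ᶠ x in 𝓝 p, dist (‖p - Q x‖⁻¹ • (p - Q x)) v < c :=
      Metric.tendsto_nhds.mp hvt c hc
    have e2 : ∀ᶠ x in 𝓝 p, dist (‖x - q‖⁻¹ • (x - q)) v < c :=
      Metric.tendsto_nhds.mp hwt c hc
    have e3 : ∀ᶠ x in 𝓝 p, dist x p < Metric.infDist p Γ :=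
      Metric.tendsto_nhds.mp tendsto_id _ hup
    filter_upwards [e1, e2, e3] with x h1 h2 h3
    have h1' : ‖‖p - Q x‖⁻¹ • (p - Q x) - v‖ ≤ c := by
      rw [dist_eq_norm] at h1; exact h1.le
    have h2' : ‖‖x - q‖⁻¹ • (x - q) - v‖ ≤ c := by
      rw [dist_eq_norm] at h2; exact h2.le
    have hxq : x - q ≠ 0 := by
      intro h0
      have hxq' : x = q := sub_eq_zero.mp h0
      rw [hxq', dist_comm, ← hqd] at h3
      exact lt_irrefl _ h3
    have hpQx : p - Q x ≠ 0 := by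
      intro h0
      exact hp (sub_eq_zero.mp h0 ▸ hQΓ x)
    have hlow : ⟪‖p - Q x‖⁻¹ • (p - Q x), x - p⟫_ℝ ≤
        Metric.infDist x Γ - Metric.infDist p Γ := by
      have h4 := inner_unit_le_norm_sub (p - Q x) (x - p) hpQx
      have h5 : (p - Q x) + (x - p) = x - Q x := by abel
      rw [h5] at h4
      have h6 : Metric.infDist x Γ = ‖x - Q x‖ := by rw [hQd x, dist_eq_norm]
      have h7 : Metric.infDist p Γ ≤ ‖p - Q x‖ := by
        rw [← dist_eq_norm]; exact Metric.infDist_le_dist_of_mem (hQΓ x)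
      linarith
    have hupp : Metric.infDist x Γ - Metric.infDist p Γ ≤
        ⟪‖x - q‖⁻¹ • (x - q), x - p⟫_ℝ := by
      have h4 := inner_unit_le_norm_sub (x - q) (p - x) hxq
      have h5 : (x - q) + (p - x) = p - q := by abel
      rw [h5] at h4
      have h6 : Metric.infDist x Γ ≤ ‖x - q‖ := by
        rw [← dist_eq_norm]; exact Metric.infDist_le_dist_of_mem hqΓ
      have h8 : ⟪‖x - q‖⁻¹ • (x - q), p - x⟫_ℝ =
          -⟪‖x - q‖⁻¹ • (x - q), x - p⟫_ℝ := by
        rw [← inner_neg_right]; congr 1; abel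
      rw [h8] at h4
      rw [hupq]
      linarith
    have hb1 : |⟪‖p - Q x‖⁻¹ • (p - Q x) - v, x - p⟫_ℝ| ≤ c * ‖x - p‖ := by
      have ha := abs_real_inner_le_norm (‖p - Q x‖⁻¹ • (p - Q x) - v) (x - p)
      have := mul_le_mul_of_nonneg_right h1' (norm_nonneg (x - p))
      linarith
    have hb2 : |⟪‖x - q‖⁻¹ • (x - q) - v, x - p⟫_ℝ| ≤ c * ‖x - p‖ := by
      have ha := abs_real_inner_le_norm (‖x - q‖⁻¹ • (x - q) - v) (x - p)
      have := mul_le_mul_of_nonneg_right h2' (norm_nonneg (x - p))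
      linarith
    have hs1 : ⟪‖p - Q x‖⁻¹ • (p - Q x) - v, x - p⟫_ℝ =
        ⟪‖p - Q x‖⁻¹ • (p - Q x), x - p⟫_ℝ - ⟪v, x - p⟫_ℝ := inner_sub_left _ _ _
    have hs2 : ⟪‖x - q‖⁻¹ • (x - q) - v, x - p⟫_ℝ =
        ⟪‖x - q‖⁻¹ • (x - q), x - p⟫_ℝ - ⟪v, x - p⟫_ℝ := inner_sub_left _ _ _
    rw [Real.norm_eq_abs, abs_le]
    constructor
    · have := neg_abs_le (⟪‖p - Q x‖⁻¹ • (p - Q x) - v, x - p⟫_ℝ)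
      rw [hs1] at this hb1
      have hb1' := (abs_le.mp hb1).1
      linarith
    · rw [hs2] at hb2
      have hb2' := (abs_le.mp hb2).2
      linarith
  exact ⟨hgrad.differentiableAt, by rw [hgrad.gradient]; exact hvnorm⟩
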